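/- arXiv:2410.09734 — 4 statements merged into one kernel-verified Lean document; each statement's English description precedes it below -/
import Mathlib

section
/- Consider a 3-CNF formula φ over variables z_1, …, z_m in which no clause contains both a variable and its negation. Encode each clause C_i as a vector x_i ∈ ℝ^{m+1} with x_{i,j} = 1 if z_j ∈ C_i, x_{i,j} = -1 if ¬z_j ∈ C_i, x_{i,j} = 0 otherwise, and x_{i,m+1} = 2. Then φ is satisfiable if and only if there exists w ∈ {-1,1}^{m+1} such that w · x_i > 0 for every clause i. -/
/-- A 3-SAT clause over `m` variables: three literals, each a variable index
together with a polarity (`true` = positive literal). -/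
abbrev Clause (m : ℕ) := Fin 3 → Fin m × Bool

/-- The encoding of a clause as a vector in ℝ^{m+1}: entry `+1`/`-1` at the
position of each positive/negative literal, `0` elsewhere among the first `m`
coordinates, and `2` in the last coordinate. -/
noncomputable def encodeClause (m : ℕ) (C : Clause m) : Fin (m + 1) → ℝ :=
  fun j =>
    if j = Fin.last m then 2
    else ∑ t : Fin 3, if (C t).1.castSucc = j then (if (C t).2 then 1 else -1) else 0

/-- An assignment satisfies a clause iff some literal evaluates to true. -/
def clauseSat {m : ℕ} (α : Fin m → Bool) (C : Clause m) : Prop :=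
  ∃ t : Fin 3, α (C t).1 = (C t).2

lemma dot_eq (m : ℕ) (C : Clause m) (w : Fin (m+1) → ℝ) :
    ∑ j, w j * encodeClause m C j
      = 2 * w (Fin.last m) + ∑ t : Fin 3, (if (C t).2 then (1:ℝ) else -1) * w ((C t).1.castSucc) := by
  rw [Fin.sum_univ_castSucc]
  have h1 : ∀ i : Fin m, (i.castSucc : Fin (m+1)) ≠ Fin.last m := fun i => (Fin.castSucc_lt_last i).ne
  have h2 : ∑ i : Fin m, w i.castSucc * encodeClause m C i.castSucc
      = ∑ t : Fin 3, (if (C t).2 then (1:ℝ) else -1) * w ((C t).1.castSucc) := by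
    simp only [encodeClause, if_neg (h1 _), Finset.mul_sum]
    rw [Finset.sum_comm]
    refine Finset.sum_congr rfl fun t _ => ?_
    rw [Finset.sum_eq_single (C t).1]
    · simp [mul_comm]
    · intro i _ hi
      rw [if_neg (by simpa [Fin.castSucc_inj] using Ne.symm hi), mul_zero]
    · simp
  have h3 : encodeClause m C (Fin.last m) = 2 := by simp [encodeClause]
  rw [h2, h3]; ring

/-- a 3-CNF formula (each clause over three distinct variables,
hence containing no complementary literals) is satisfiable iff there is a sign
vector `w ∈ {-1,1}^{m+1}` with `w · x_i > 0` for every encoded clause. -/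
theorem stmt_3 (m : ℕ) (clauses : List (Clause m))
    (hdistinct : ∀ C ∈ clauses, Function.Injective (fun t => (C t).1)) :
    (∃ α : Fin m → Bool, ∀ C ∈ clauses, clauseSat α C) ↔
      (∃ w : Fin (m + 1) → ℝ, (∀ j, w j = 1 ∨ w j = -1) ∧
        ∀ C ∈ clauses, 0 < ∑ j, w j * encodeClause m C j) := by
  constructor
  · rintro ⟨α, hα⟩
    refine ⟨Fin.snoc (fun i => if α i then 1 else -1) 1, ?_, ?_⟩
    · intro j
      refine Fin.lastCases ?_ ?_ j
      · left; simp
      · intro i; simp only [Fin.snoc_castSucc]; split <;> simp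
    · intro C hC
      obtain ⟨t0, ht0⟩ := hα C hC
      rw [dot_eq]
      simp only [Fin.snoc_last, Fin.snoc_castSucc]
      set s : Fin 3 → ℝ := fun t =>
        (if (C t).2 then (1:ℝ) else -1) * (if α (C t).1 then 1 else -1) with hs
      have hge : ∀ t, -1 ≤ s t := by
        intro t; simp only [hs]; split <;> split <;> norm_num
      have h1 : s t0 = 1 := by
        simp only [hs, ht0]; cases (C t0).2 <;> simp
      have h4 : ∑ t ∈ Finset.univ.erase t0, (-1:ℝ) ≤ ∑ t ∈ Finset.univ.erase t0, s t :=
        Finset.sum_le_sum (fun t _ => hge t)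
      have h5 : ∑ t ∈ Finset.univ.erase t0, (-1:ℝ) = -2 := by
        simp [Finset.card_erase_of_mem]
      have h6 := Finset.add_sum_erase _ s (Finset.mem_univ t0)
      linarith
  · rintro ⟨w, hw, hdot⟩
    refine ⟨fun i => decide (w i.castSucc = 1), ?_⟩
    intro C hC
    have h := hdot C hC
    rw [dot_eq] at h
    set s : Fin 3 → ℝ := fun t => (if (C t).2 then (1:ℝ) else -1) * w ((C t).1.castSucc) with hs
    have hle : ∀ t, s t ≤ 1 := by
      intro t; simp only [hs]
      rcases hw ((C t).1.castSucc) with h' | h' <;> rw [h'] <;> split <;> norm_num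
    have hwl : w (Fin.last m) ≤ 1 := by rcases hw (Fin.last m) with h'|h' <;> rw [h'] <;> norm_num
    -- some t with s t = 1
    have hsum : 2 < ∑ t : Fin 3, s t + 4 := by
      have : 2 * w (Fin.last m) ≤ 2 := by linarith
      linarith
    have hex : ∃ t, s t = 1 := by
      by_contra hne
      push_neg at hne
      have hltall : ∀ t, s t ≤ -1 := by
        intro t
        have := hne t
        simp only [hs] at this ⊢
        rcases hw ((C t).1.castSucc) with h'|h' <;> rw [h'] at this ⊢ <;>
          revert this <;> split <;> norm_num
      rw [Fin.sum_univ_three] at hsum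
      have := hltall 0; have := hltall 1; have := hltall 2
      linarith
    obtain ⟨t, ht⟩ := hex
    refine ⟨t, ?_⟩
    have : w ((C t).1.castSucc) = if (C t).2 then (1:ℝ) else -1 := by
      simp only [hs] at ht
      rcases hw ((C t).1.castSucc) with h'|h' <;> rw [h'] at ht ⊢ <;>
        revert ht <;> split <;> norm_num
    cases hb : (C t).2 <;> simp only [hb] at this <;> norm_num at this <;> simp [this] <;> norm_num
end

section
/- Suppose w ∈ {-1,1}^{m+1} satisfies w · x_i > 0 for all clause vectors x_i arising from the 3-SAT encoding. Then the assignment α defined by α_j = true iff w_j = 1 (for j ≤ m) satisfies every clause of the formula. -/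
lemma inner_eq (m : ℕ) (C : Clause m) (w : Fin (m + 1) → ℝ) :
    ∑ j, w j * encodeClause m C j
      = w (Fin.last m) * 2
        + ∑ t : Fin 3, (if (C t).2 then (1:ℝ) else -1) * w ((C t).1.castSucc) := by
  rw [Fin.sum_univ_castSucc]
  rw [add_comm]
  congr 1
  · simp [encodeClause]
  · have h : ∀ i : Fin m, w i.castSucc * encodeClause m C i.castSucc
        = ∑ t : Fin 3, (if (C t).1 = i then (if (C t).2 then (1:ℝ) else -1) * w i.castSucc else 0) := by
      intro i
      have hne : i.castSucc ≠ Fin.last m := (Fin.castSucc_lt_last i).ne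
      rw [encodeClause, if_neg hne, Finset.mul_sum]
      refine Finset.sum_congr rfl fun t _ => ?_
      by_cases hc : (C t).1 = i
      · simp [hc, mul_comm]
      · have : (C t).1.castSucc ≠ i.castSucc := fun h => hc (Fin.castSucc_injective m h)
        simp [this, hc]
    simp only [h]
    rw [Finset.sum_comm]
    refine Finset.sum_congr rfl fun t _ => ?_
    simp

/-- if `w ∈ {-1,1}^{m+1}` has positive inner product with every
encoded clause, then the assignment `α_j := (w_j = 1)` satisfies every clause. -/
theorem stmt_4 (m : ℕ) (clauses : List (Clause m))
    (hdistinct : ∀ C ∈ clauses, Function.Injective (fun t => (C t).1))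
    (w : Fin (m + 1) → ℝ) (hw : ∀ j, w j = 1 ∨ w j = -1)
    (hsep : ∀ C ∈ clauses, 0 < ∑ j, w j * encodeClause m C j) :
    ∀ C ∈ clauses, clauseSat (fun j => decide (w j.castSucc = 1)) C := by
  intro C hC
  by_contra hns
  have hterm : ∀ t : Fin 3,
      (if (C t).2 then (1:ℝ) else -1) * w ((C t).1.castSucc) = -1 := by
    intro t
    have hnt : ¬ (decide (w ((C t).1).castSucc = 1) = (C t).2) := fun h => hns ⟨t, h⟩
    rcases hw ((C t).1).castSucc with h1 | h1 <;> cases hb : (C t).2 <;>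
      simp [h1, hb] at hnt ⊢ <;> norm_num at hnt
  have := hsep C hC
  rw [inner_eq] at this
  simp only [hterm] at this
  rcases hw (Fin.last m) with h | h <;> simp [h] at this <;> norm_num at this
end

section
/- If φ is a satisfiable 3-CNF formula (with no clause containing complementary literals) with satisfying assignment α, then the weight vector w with w_j = 1 if α_j is true, w_j = -1 if α_j is false, and w_{m+1} = 1, satisfies w · x_i ≥ 1 > 0 for every clause vector x_i of the encoding. -/
/-- The weight vector associated to an assignment: `w_j = 1` if `α j` is true,
`-1` otherwise, and `w_{m+1} = 1`. -/
noncomputable def weightOfAssignment (m : ℕ) (α : Fin m → Bool) : Fin (m + 1) → ℝ :=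
  Fin.lastCases 1 (fun j => if α j then 1 else -1)

/-- if `α` satisfies every clause of a 3-CNF formula (clauses over
three distinct variables), then the associated weight vector has inner product
`≥ 1 > 0` with every encoded clause vector. -/
theorem stmt_5 (m : ℕ) (clauses : List (Clause m))
    (hdistinct : ∀ C ∈ clauses, Function.Injective (fun t => (C t).1))
    (α : Fin m → Bool) (hα : ∀ C ∈ clauses, clauseSat α C) :
    ∀ C ∈ clauses,
      1 ≤ ∑ j, weightOfAssignment m α j * encodeClause m C j ∧
      0 < ∑ j, weightOfAssignment m α j * encodeClause m C j := by
  intro C hC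
  have key : ∑ j, weightOfAssignment m α j * encodeClause m C j
      = 2 + ∑ t : Fin 3, (if α (C t).1 = (C t).2 then (1:ℝ) else -1) := by
    rw [Fin.sum_univ_castSucc]
    have h1 : weightOfAssignment m α (Fin.last m) * encodeClause m C (Fin.last m) = 2 := by
      simp [weightOfAssignment, encodeClause]
    rw [h1]
    have h2 : ∀ j : Fin m, weightOfAssignment m α j.castSucc * encodeClause m C j.castSucc
        = ∑ t : Fin 3, if (C t).1 = j then
            (if α j then (1:ℝ) else -1) * (if (C t).2 then 1 else -1) else 0 := by
      intro j
      simp only [weightOfAssignment, Fin.lastCases_castSucc, encodeClause,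
        (Fin.castSucc_lt_last j).ne, if_false, Finset.mul_sum, Fin.castSucc_inj,
        mul_ite, mul_zero]
    simp only [h2]
    rw [Finset.sum_comm, add_comm]
    congr 1
    apply Finset.sum_congr rfl
    intro t _
    rw [Finset.sum_ite_eq]
    simp only [Finset.mem_univ, if_true]
    by_cases ha : α (C t).1 <;> by_cases hb : (C t).2 <;>
      simp [ha, hb]
  obtain ⟨t0, ht0⟩ := hα C hC
  have hge : ∀ t : Fin 3, (-1:ℝ) ≤ (if α (C t).1 = (C t).2 then (1:ℝ) else -1) := by
    intro t; split <;> norm_num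
  have heq : (if α (C t0).1 = (C t0).2 then (1:ℝ) else -1) = 1 := if_pos ht0
  have hsplit : ∑ t : Fin 3, (if α (C t).1 = (C t).2 then (1:ℝ) else -1)
      = (if α (C t0).1 = (C t0).2 then (1:ℝ) else -1)
        + ∑ t ∈ Finset.univ.erase t0, (if α (C t).1 = (C t).2 then (1:ℝ) else -1) :=
    (Finset.add_sum_erase _ _ (Finset.mem_univ t0)).symm
  have hbound := Finset.card_nsmul_le_sum (Finset.univ.erase t0)
    (fun t => if α (C t).1 = (C t).2 then (1:ℝ) else -1) (-1) (fun t _ => hge t)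
  have hcard : (Finset.univ.erase t0).card = 2 := by
    rw [Finset.card_erase_of_mem (Finset.mem_univ t0)]
    simp
  rw [hcard] at hbound
  have hnsmul : (2 : ℕ) • (-1 : ℝ) = -2 := by norm_num
  rw [hnsmul] at hbound
  rw [key, hsplit, heq]
  constructor <;> linarith
end

section
/- For a clause vector x ∈ ℝ^{m+1} from the 3-SAT encoding and any weight vector w with w_j ∈ {-1,1} for j ≤ m and w_{m+1} = 1, the inner product satisfies w · x = 2k - 3 + 2, where k is the number of literals of the clause satisfied by the assignment corresponding to w. In particular w · x > 0 iff k ≥ 1. -/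
/-- for a clause over three distinct variables and a weight vector
with `±1` entries on the first `m` coordinates and `w_{m+1} = 1`, the inner
product equals `2k - 3 + 2`, where `k` counts the satisfied literals
(`w_j x_j = 1`); in particular it is positive iff `k ≥ 1`. -/
theorem stmt_6 (m : ℕ) (C : Clause m)
    (hdistinct : Function.Injective (fun t => (C t).1))
    (w : Fin (m + 1) → ℝ) (hw : ∀ j : Fin m, w j.castSucc = 1 ∨ w j.castSucc = -1)
    (hwlast : w (Fin.last m) = 1)
    (k : ℕ)
    (hk : k = (Finset.univ.filter
      (fun t : Fin 3 => w (C t).1.castSucc * (if (C t).2 then 1 else -1) = 1)).card) :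
    (∑ j, w j * encodeClause m C j = 2 * (k : ℝ) - 3 + 2) ∧
      (0 < ∑ j, w j * encodeClause m C j ↔ 1 ≤ k) := by
  have hmain : ∑ j, w j * encodeClause m C j = 2 * (k : ℝ) - 3 + 2 := by
    rw [Fin.sum_univ_castSucc]
    have hlast : w (Fin.last m) * encodeClause m C (Fin.last m) = 2 := by
      simp [encodeClause, hwlast]
    rw [hlast]
    have h1 : ∀ i : Fin m, encodeClause m C i.castSucc =
        ∑ t : Fin 3, if (C t).1 = i then (if (C t).2 then (1:ℝ) else -1) else 0 := by
      intro i
      unfold encodeClause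
      rw [if_neg (Fin.castSucc_lt_last i).ne]
      refine Finset.sum_congr rfl fun t _ => ?_
      simp [Fin.castSucc_inj]
    have h2 : ∑ i : Fin m, w i.castSucc * encodeClause m C i.castSucc =
        ∑ t : Fin 3, w (C t).1.castSucc * (if (C t).2 then (1:ℝ) else -1) := by
      simp_rw [h1, Finset.mul_sum]
      rw [Finset.sum_comm]
      refine Finset.sum_congr rfl fun t _ => ?_
      rw [Finset.sum_eq_single (C t).1]
      · simp
      · intro b _ hb
        simp [Ne.symm hb]
      · simp
    rw [h2]
    have h3 : ∀ t : Fin 3, w (C t).1.castSucc * (if (C t).2 then (1:ℝ) else -1) =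
        2 * (if w (C t).1.castSucc * (if (C t).2 then (1:ℝ) else -1) = 1 then (1:ℝ) else 0) - 1 := by
      intro t
      rcases hw (C t).1 with h | h <;> rcases hb : (C t).2 <;> simp [h] <;> norm_num
    rw [Finset.sum_congr rfl fun t _ => h3 t]
    rw [Finset.sum_sub_distrib, ← Finset.mul_sum, Finset.sum_boole]
    simp [hk]
  refine ⟨hmain, ?_⟩
  rw [hmain]
  constructor
  · intro h
    by_contra hle
    push_neg at hle
    interval_cases k <;> norm_num at h
  · intro h
    have : (1:ℝ) ≤ (k:ℝ) := by exact_mod_cast h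
    linarith
end
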